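/- arXiv:1809.05186 — 2 statements merged into one kernel-verified Lean document; each statement's English description precedes it below -/
import Mathlib

section
/- Every minimal point-separating set F ⊆ C(X, ℝ) (with the topology of pointwise convergence) is discrete as a subspace of C_p(X): every f ∈ F has a neighborhood in the pointwise topology meeting F only in f. -/
/-!
By minimality, `F \ {f}` fails to separate some pair `x ≠ y`, so `f` is the only member of `F`
separating `x` and `y`; the open set `{g | g x ≠ g y}` of `C_p(X)` then meets `F` only in `f`.
-/

/-- A set of functions separates points. -/
def SepFun {X : Type*} (F : Set (X → ℝ)) : Prop :=
  ∀ x y : X, x ≠ y → ∃ f ∈ F, f x ≠ f y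

def MinSepFun {X : Type*} (F : Set (X → ℝ)) : Prop :=
  SepFun F ∧ ∀ G ⊂ F, ¬ SepFun G

theorem MinSepFun.exists_pair_separated_only_by {X : Type*} {F : Set (X → ℝ)}
    (hF : MinSepFun F) {f : X → ℝ} (hf : f ∈ F) :
    ∃ x y : X, f x ≠ f y ∧ ∀ g ∈ F, g x ≠ g y → g = f := by
  have hnot : ¬ SepFun (F \ {f}) := hF.2 _ (Set.sdiff_singleton_ssubset.mpr hf)
  simp only [SepFun, not_forall, not_exists, not_and, not_not, exists_prop] at hnot
  obtain ⟨x, y, hxy, hagree⟩ := hnot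
  have honly : ∀ g ∈ F, g x ≠ g y → g = f := fun g hg hne =>
    by_contra fun hgf => hne (hagree g ⟨hg, hgf⟩)
  obtain ⟨g, hg, hne⟩ := hF.1 x y hxy
  exact ⟨x, y, honly g hg hne ▸ hne, honly⟩

theorem stmt5_general {X : Type*}
    (F : Set (X → ℝ)) (hF : MinSepFun F) :
    ∀ f ∈ F, ∃ U : Set (X → ℝ), IsOpen U ∧ f ∈ U ∧ U ∩ F = {f} := by
  intro f hf
  obtain ⟨x, y, hfxy, honly⟩ := hF.exists_pair_separated_only_by hf
  refine ⟨{g | g x ≠ g y}, isOpen_ne_fun (continuous_apply x) (continuous_apply y), hfxy, ?_⟩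
  exact Set.eq_singleton_iff_unique_mem.mpr ⟨⟨hfxy, hf⟩, fun g hg => honly g hg.2 hg.1⟩

/-- Any minimal point-separating set of continuous functions is discrete as a subspace
of `C_p(X)`, i.e. of `X → ℝ` with the product (pointwise convergence) topology: every
`f ∈ F` admits an open neighborhood meeting `F` only in `f`. -/
theorem stmt5 {X : Type*} [TopologicalSpace X]
    (F : Set (X → ℝ)) (hc : ∀ f ∈ F, Continuous f) (hF : MinSepFun F) :
    ∀ f ∈ F, ∃ U : Set (X → ℝ), IsOpen U ∧ f ∈ U ∧ U ∩ F = {f} :=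
  stmt5_general F hF
end

section
/- Let X = {0} ∪ {1/(n+1) : n ∈ ω} ⊆ ℝ with the subspace topology. Define f_n : X → ℝ by f_n(x) = 1/(n+1) if x = 1/(n+1) and f_n(x) = 0 otherwise. Then K = {0} ∪ {f_n : n ∈ ω} (where 0 is the zero function) is a compact point-separating subset of C_p(X) containing no proper compact point-separating subset. -/
/-!
The `fseq n` converge pointwise to `0`, since each point of `Xseq` lies in the support of at most
one of them; so `K` is a convergent sequence together with its limit, hence compact. A closed
proper subset of `K` cannot contain every `fseq n`, for then it would contain their limit `0` as
well; but `fseq n` is the only member of `K` that distinguishes `1/(n+1)` from `0`.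
-/

/-- The convergent sequence `{0} ∪ {1/(n+1) : n ∈ ω}` as a subspace of `ℝ`. -/
def Xseq : Set ℝ := {x : ℝ | x = 0 ∨ ∃ n : ℕ, x = 1 / ((n : ℝ) + 1)}

/-- `fseq n` takes the value `1/(n+1)` at the point `1/(n+1)` and `0` elsewhere. -/
noncomputable def fseq (n : ℕ) : Xseq → ℝ :=
  fun x => if (x : ℝ) = 1 / ((n : ℝ) + 1) then 1 / ((n : ℝ) + 1) else 0

open Set Filter Topology

theorem exists_notMem_of_ssubset_insert_range {X ι : Type*} [TopologicalSpace X]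
    {l : Filter ι} [l.NeBot] {u : ι → X} {a : X} (hu : Tendsto u l (𝓝 a)) {K : Set X}
    (hK : IsClosed K) (hsub : K ⊂ insert a (range u)) : ∃ i, u i ∉ K := by
  by_contra! h
  have ha : a ∈ K := hK.mem_of_tendsto hu (Eventually.of_forall h)
  exact hsub.not_subset (insert_subset ha (range_subset_iff.2 h))

theorem one_div_nat_add_one_mem_Ioo_iff (m n : ℕ) :
    1 / ((m : ℝ) + 1) ∈ Ioo (1 / ((n : ℝ) + 3 / 2)) (1 / ((n : ℝ) + 1 / 2)) ↔ m = n := by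
  rw [mem_Ioo, one_div_lt_one_div (by positivity) (by positivity),
    one_div_lt_one_div (by positivity) (by positivity)]
  constructor
  · rintro ⟨hlt, hgt⟩
    have hm : (m : ℝ) < n + 1 := by linarith
    have hn : (n : ℝ) < m + 1 := by linarith
    norm_cast at hm hn
    omega
  · rintro rfl
    constructor <;> linarith

namespace Xseq

noncomputable def pt (n : ℕ) : Xseq := ⟨1 / ((n : ℝ) + 1), Or.inr ⟨n, rfl⟩⟩

def zero : Xseq := ⟨0, Or.inl rfl⟩

theorem eq_zero_or_eq_pt (x : Xseq) : x = zero ∨ ∃ n, x = pt n := by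
  obtain ⟨x, rfl | ⟨n, rfl⟩⟩ := x
  exacts [Or.inl rfl, Or.inr ⟨n, rfl⟩]

theorem pt_ne_zero (n : ℕ) : pt n ≠ zero :=
  fun h => Nat.one_div_pos_of_nat.ne' (congrArg Subtype.val h)

theorem pt_injective : Function.Injective pt :=
  fun m n h => by simpa [pt] using congrArg Subtype.val h

theorem isOpen_singleton_pt (n : ℕ) : IsOpen {pt n} := by
  rw [isOpen_induced_iff]
  refine ⟨_, isOpen_Ioo (a := 1 / ((n : ℝ) + 3 / 2)) (b := 1 / ((n : ℝ) + 1 / 2)), ?_⟩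
  ext x
  rcases eq_zero_or_eq_pt x with rfl | ⟨m, rfl⟩
  · simp only [mem_preimage, mem_singleton_iff, (pt_ne_zero n).symm, iff_false]
    exact fun h => (by positivity : (0 : ℝ) < 1 / (n + 3 / 2)).not_gt h.1
  · exact (one_div_nat_add_one_mem_Ioo_iff m n).trans pt_injective.eq_iff.symm

end Xseq

open Xseq

theorem fseq_apply_self (n : ℕ) : fseq n (pt n) = 1 / ((n : ℝ) + 1) := by
  simp [fseq, pt]

theorem fseq_apply_of_ne {n : ℕ} {x : Xseq} (h : x ≠ pt n) : fseq n x = 0 :=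
  if_neg fun hx => h (Subtype.ext hx)

theorem fseq_apply_ne_zero_iff {n : ℕ} {x : Xseq} : fseq n x ≠ 0 ↔ x = pt n := by
  refine ⟨fun h => by_contra fun hx => h (fseq_apply_of_ne hx), ?_⟩
  rintro rfl
  rw [fseq_apply_self]
  positivity

theorem continuous_fseq (n : ℕ) : Continuous (fseq n) := by
  have hclopen : IsClopen {x : Xseq | (x : ℝ) = 1 / ((n : ℝ) + 1)} := by
    have hpt : {x : Xseq | (x : ℝ) = 1 / ((n : ℝ) + 1)} = {pt n} := by
      ext x
      simp [pt, Subtype.ext_iff]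
    rw [hpt]
    exact ⟨isClosed_singleton, isOpen_singleton_pt n⟩
  refine continuous_const.if (fun x hx => ?_) continuous_const
  rw [hclopen.frontier_eq] at hx
  exact absurd hx (notMem_empty x)

theorem tendsto_fseq_cofinite : Tendsto fseq cofinite (𝓝 0) := by
  refine tendsto_pi_nhds.2 fun x => tendsto_const_nhds.congr' (EventuallyEq.symm ?_)
  refine eventually_cofinite.2 (Set.Subsingleton.finite fun m hm n hn => ?_)
  exact pt_injective ((fseq_apply_ne_zero_iff.1 hm).symm.trans (fseq_apply_ne_zero_iff.1 hn))

theorem sepFun_insert_zero_range_fseq : SepFun (insert (0 : Xseq → ℝ) (range fseq)) := by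
  have hsep : ∀ n (y : Xseq), y ≠ pt n → fseq n (pt n) ≠ fseq n y := fun n y hy => by
    rw [fseq_apply_of_ne hy]
    exact fseq_apply_ne_zero_iff.2 rfl
  intro x y hxy
  rcases eq_zero_or_eq_pt x with rfl | ⟨n, rfl⟩
  · obtain ⟨m, rfl⟩ := (eq_zero_or_eq_pt y).resolve_left hxy.symm
    exact ⟨fseq m, mem_insert_of_mem _ (mem_range_self m), (hsep m zero hxy).symm⟩
  · exact ⟨fseq n, mem_insert_of_mem _ (mem_range_self n), hsep n y hxy.symm⟩

theorem not_sepFun_of_ssubset {K : Set (Xseq → ℝ)} (hK : IsClosed K)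
    (hsub : K ⊂ insert (0 : Xseq → ℝ) (range fseq)) : ¬ SepFun K := by
  obtain ⟨n, hn⟩ := exists_notMem_of_ssubset_insert_range tendsto_fseq_cofinite hK hsub
  intro hsep
  obtain ⟨f, hf, hne⟩ := hsep (pt n) zero (pt_ne_zero n)
  rcases hsub.subset hf with rfl | ⟨m, rfl⟩
  · exact hne rfl
  · have hmn : pt n ≠ pt m := fun h => hn (pt_injective h ▸ hf)
    rw [fseq_apply_of_ne hmn, fseq_apply_of_ne (pt_ne_zero m).symm] at hne
    exact hne rfl

/-- `K = {0} ∪ {fseq n : n ∈ ω}` is a compact point-separating set of continuous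
functions in `C_p(Xseq)` (pointwise convergence topology) with no proper compact
point-separating subset. -/
theorem stmt14 :
    (∀ g ∈ insert (0 : Xseq → ℝ) (Set.range fseq), Continuous g) ∧
    IsCompact (insert (0 : Xseq → ℝ) (Set.range fseq)) ∧
    SepFun (insert (0 : Xseq → ℝ) (Set.range fseq)) ∧
    ∀ K' ⊂ insert (0 : Xseq → ℝ) (Set.range fseq), IsCompact K' → ¬ SepFun K' := by
  refine ⟨?_, tendsto_fseq_cofinite.isCompact_insert_range_of_cofinite,
    sepFun_insert_zero_range_fseq, fun K' hsub hK => not_sepFun_of_ssubset hK.isClosed hsub⟩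
  rintro g (rfl | ⟨n, rfl⟩)
  exacts [continuous_const, continuous_fseq n]
end
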